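/- arXiv:2006.09890 — 4 statements merged into one kernel-verified Lean document; each statement's English description precedes it below -/
import Mathlib

section
/- The Jaccard distance is a pseudometric on nonempty finite sets: for any nonempty finite sets A, B, C of elements of a type, the function d(A,B) = 1 - |A ∩ B| / |A ∪ B| (with cardinalities taken as real numbers) satisfies d(A,A) = 0, d(A,B) = d(B,A), and the triangle inequality d(A,C) ≤ d(A,B) + d(B,C). -/
/-!
Inside the common universe `U = A ∪ B ∪ C`,
`d(A,C) ≤ 1 - |A ∩ C| / |U| = (|A ∆ C| + |B \ (A ∪ C)|) / |U|`, and
`|A ∆ C| + |B \ (A ∪ C)| ≤ |A ∆ B| + |B ∆ C|` because `A ∆ C ⊆ A ∆ B ∪ B ∆ C` while every element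
of `B` outside `A ∪ C` lies in both `A ∆ B` and `B ∆ C`. Finally `|A ∆ B| / |U| ≤ d(A,B)`, since
`d(A,B) = |A ∆ B| / |A ∪ B|`, and likewise for `d(B,C)`.
-/

open Finset
open scoped symmDiff

/-- Jaccard distance on finite sets. -/
noncomputable def jaccardDist {α : Type*} [DecidableEq α] (A B : Finset α) : ℝ :=
  1 - ((A ∩ B).card : ℝ) / ((A ∪ B).card : ℝ)

namespace Finset

variable {α : Type*} [DecidableEq α]

theorem card_symmDiff_add_card_inter (A B : Finset α) : #(A ∆ B) + #(A ∩ B) = #(A ∪ B) := by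
  rw [symmDiff_eq_sup_sdiff_inf]
  exact card_sdiff_add_card_eq_card inter_subset_union

theorem card_symmDiff_add_card_sdiff_union_le (A B C : Finset α) :
    #(A ∆ C) + #(B \ (A ∪ C)) ≤ #(A ∆ B) + #(B ∆ C) := by
  have h_union : A ∆ C ⊆ A ∆ B ∪ B ∆ C := symmDiff_triangle A B C
  have h_inter : B \ (A ∪ C) ⊆ A ∆ B ∩ B ∆ C := by
    intro x hx
    simp only [mem_sdiff, mem_union, not_or] at hx
    simp [mem_symmDiff, hx]
  rw [← card_union_add_card_inter (A ∆ B) (B ∆ C)]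
  exact add_le_add (card_le_card h_union) (card_le_card h_inter)

end Finset

section jaccardDist

variable {α : Type*} [DecidableEq α]

theorem jaccardDist_comm (A B : Finset α) : jaccardDist A B = jaccardDist B A := by
  rw [jaccardDist, jaccardDist, inter_comm, union_comm]

theorem jaccardDist_self {A : Finset α} (hA : A.Nonempty) : jaccardDist A A = 0 := by
  have hA' : (#A : ℝ) ≠ 0 := by exact_mod_cast hA.card_ne_zero
  rw [jaccardDist, inter_self, union_self, div_self hA', sub_self]

theorem jaccardDist_empty_left (B : Finset α) : jaccardDist ∅ B = 1 := by
  simp [jaccardDist]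

theorem jaccardDist_empty_right (A : Finset α) : jaccardDist A ∅ = 1 := by
  simp [jaccardDist]

theorem jaccardDist_nonneg (A B : Finset α) : 0 ≤ jaccardDist A B := by
  rw [jaccardDist, sub_nonneg]
  exact div_le_one_of_le₀ (by exact_mod_cast card_le_card inter_subset_union) (Nat.cast_nonneg _)

theorem jaccardDist_le_one (A B : Finset α) : jaccardDist A B ≤ 1 := by
  rw [jaccardDist, sub_le_self_iff]
  positivity

theorem jaccardDist_eq_card_symmDiff_div {A B : Finset α} (h : (A ∪ B).Nonempty) :
    jaccardDist A B = #(A ∆ B) / #(A ∪ B) := by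
  have h' : (#(A ∪ B) : ℝ) ≠ 0 := by exact_mod_cast h.card_ne_zero
  have h_card : (#(A ∆ B) : ℝ) + #(A ∩ B) = #(A ∪ B) := by
    exact_mod_cast card_symmDiff_add_card_inter A B
  rw [jaccardDist, eq_div_iff h', sub_mul, one_mul, div_mul_cancel₀ _ h']
  linarith

theorem card_symmDiff_div_le_jaccardDist {A B U : Finset α} (h : (A ∪ B).Nonempty)
    (hU : A ∪ B ⊆ U) : (#(A ∆ B) : ℝ) / #U ≤ jaccardDist A B := by
  rw [jaccardDist_eq_card_symmDiff_div h]
  gcongr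

theorem jaccardDist_le_one_sub_card_inter_div {A B U : Finset α} (h : (A ∪ B).Nonempty)
    (hU : A ∪ B ⊆ U) : jaccardDist A B ≤ 1 - (#(A ∩ B) : ℝ) / #U := by
  rw [jaccardDist]
  gcongr

theorem jaccardDist_triangle_of_nonempty {A B C : Finset α} (hB : B.Nonempty)
    (hAC : (A ∪ C).Nonempty) : jaccardDist A C ≤ jaccardDist A B + jaccardDist B C := by
  set U := B ∪ (A ∪ C)
  have hU : (#U : ℝ) ≠ 0 := by exact_mod_cast (hAC.mono subset_union_right).card_ne_zero
  have h_card : (#(A ∆ C) : ℝ) + #(B \ (A ∪ C)) + #(A ∩ C) = #U := by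
    have h_split : #(B \ (A ∪ C)) + #(A ∪ C) = #U := card_sdiff_add_card _ _
    rw [← h_split, ← card_symmDiff_add_card_inter A C]
    push_cast
    ring
  have h_le : (#(A ∆ C) : ℝ) + #(B \ (A ∪ C)) ≤ #(A ∆ B) + #(B ∆ C) := by
    exact_mod_cast card_symmDiff_add_card_sdiff_union_le A B C
  calc jaccardDist A C
      ≤ 1 - (#(A ∩ C) : ℝ) / #U := jaccardDist_le_one_sub_card_inter_div hAC subset_union_right
    _ = ((#(A ∆ C) : ℝ) + #(B \ (A ∪ C))) / #U := by
        rw [eq_div_iff hU, sub_mul, one_mul, div_mul_cancel₀ _ hU]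
        linarith
    _ ≤ ((#(A ∆ B) : ℝ) + #(B ∆ C)) / #U := by gcongr
    _ = (#(A ∆ B) : ℝ) / #U + #(B ∆ C) / #U := add_div _ _ _
    _ ≤ jaccardDist A B + jaccardDist B C := by
        gcongr
        · exact card_symmDiff_div_le_jaccardDist (hB.mono subset_union_right)
            (fun x ↦ by simp only [U, mem_union]; tauto)
        · exact card_symmDiff_div_le_jaccardDist (hB.mono subset_union_left)
            (fun x ↦ by simp only [U, mem_union]; tauto)

/-- Holds for all finite sets, with the convention `jaccardDist ∅ ∅ = 1`. -/
theorem jaccardDist_triangle (A B C : Finset α) :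
    jaccardDist A C ≤ jaccardDist A B + jaccardDist B C := by
  have h_dist_one : jaccardDist A B = 1 → jaccardDist A C ≤ jaccardDist A B + jaccardDist B C :=
    fun h ↦ by linarith [jaccardDist_le_one A C, jaccardDist_nonneg B C]
  rcases B.eq_empty_or_nonempty with rfl | hB
  · exact h_dist_one (jaccardDist_empty_right A)
  rcases (A ∪ C).eq_empty_or_nonempty with hAC | hAC
  · rw [union_eq_empty] at hAC
    exact h_dist_one (hAC.1 ▸ jaccardDist_empty_left B)
  · exact jaccardDist_triangle_of_nonempty hB hAC

end jaccardDist

theorem jaccard_pseudometric_general {α : Type*} [DecidableEq α]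
    (A B C : Finset α) (hA : A.Nonempty) :
    jaccardDist A A = 0 ∧
    jaccardDist A B = jaccardDist B A ∧
    jaccardDist A C ≤ jaccardDist A B + jaccardDist B C :=
  ⟨jaccardDist_self hA, jaccardDist_comm A B, jaccardDist_triangle A B C⟩

/-- The Jaccard distance is a pseudometric on nonempty finite sets:
`d(A,A) = 0`, `d(A,B) = d(B,A)`, and `d(A,C) ≤ d(A,B) + d(B,C)`. -/
theorem jaccard_pseudometric {α : Type*} [DecidableEq α]
    (A B C : Finset α) (hA : A.Nonempty) (hB : B.Nonempty) (hC : C.Nonempty) :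
    jaccardDist A A = 0 ∧
    jaccardDist A B = jaccardDist B A ∧
    jaccardDist A C ≤ jaccardDist A B + jaccardDist B C :=
  jaccard_pseudometric_general A B C hA
end

section
/- Reduction from support to accuracy: let x₁, …, xₙ be finite subsets of a finite item set F (the positive transactions), and add one negative record equal to F itself. For an itemset X ⊆ F, let c(X) = |{i ∈ {1,…,n} : X ⊆ xᵢ}| be its support among the positive records. Since X ⊆ F, the positive rule with body X covers exactly c(X) positive records and the one negative record, so its accuracy equals c(X) / (c(X) + 1). Consequently, for every natural number s ≥ 1, the rule with body X has accuracy at least s/(s+1) if and only if c(X) ≥ s; hence the set of itemsets X ⊆ F whose positive rule has accuracy at least s/(s+1) is exactly the set of itemsets with support at least s, and in particular the two sets have the same cardinality. -/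
open Finset

theorem div_add_one_le_div_add_one_iff {α : Type*} [Field α] [LinearOrder α]
    [IsStrictOrderedRing α] {a b : α} (ha : 0 < a + 1) (hb : 0 < b + 1) :
    a / (a + 1) ≤ b / (b + 1) ↔ a ≤ b := by
  rw [div_le_div_iff₀ ha hb]
  constructor <;> intro h <;> linarith

theorem Finset.card_filter_univ_option {α : Type*} [Fintype α] (p : Option α → Prop)
    [DecidablePred p] :
    #{o | p o} = #{a | p (some a)} + if p none then 1 else 0 := by
  rw [card_filter, card_filter, Fintype.sum_option, add_comm]

theorem support_to_accuracy_reduction_general {ι : Type*} [DecidableEq ι]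
    (F : Finset ι) (n : ℕ) (x : Fin n → Finset ι)
    (c : Finset ι → ℕ)
    (hc : ∀ X, c X = (Finset.univ.filter fun i : Fin n => X ⊆ x i).card)
    (s : ℕ) :
    (∀ X ⊆ F,
      (Finset.univ.filter fun o : Option (Fin n) => X ⊆ o.elim F x).card
        = c X + 1) ∧
    (∀ X ⊆ F, ((s : ℝ) / (s + 1) ≤ (c X : ℝ) / (c X + 1) ↔ s ≤ c X)) ∧
    (F.powerset.filter fun X => (s : ℝ) / (s + 1) ≤ (c X : ℝ) / (c X + 1))
      = (F.powerset.filter fun X => s ≤ c X) ∧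
    (F.powerset.filter fun X => (s : ℝ) / (s + 1) ≤ (c X : ℝ) / (c X + 1)).card
      = (F.powerset.filter fun X => s ≤ c X).card := by
  have accuracy_le_iff (X : Finset ι) :
      (s : ℝ) / (s + 1) ≤ (c X : ℝ) / (c X + 1) ↔ s ≤ c X := by
    rw [div_add_one_le_div_add_one_iff (by positivity) (by positivity), Nat.cast_le]
  have filters_eq := filter_congr (s := F.powerset) fun X _ => accuracy_le_iff X
  refine ⟨fun X hX => ?_, fun X _ => accuracy_le_iff X, filters_eq, congrArg card filters_eq⟩
  rw [card_filter_univ_option, hc]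
  simp only [Option.elim_some, Option.elim_none, hX, if_true]
  rfl

/-- Reduction from support to accuracy.  The dataset has positive records
`x 0, …, x (n-1) ⊆ F` and a single negative record equal to `F` itself
(modelled by `Option (Fin n)`, where `none` is the negative record).
For `X ⊆ F` with support `c X = |{i : X ⊆ x i}|`, the rule with body `X`
covers exactly `c X + 1` records (the `c X` positive ones and the negative
one), so its accuracy is `c X / (c X + 1)`; for every `s ≥ 1`, the accuracy
is at least `s/(s+1)` iff `c X ≥ s`, the set of itemsets whose rule has
accuracy at least `s/(s+1)` equals the set of itemsets of support at least
`s`, and in particular the two sets have the same cardinality. -/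
theorem support_to_accuracy_reduction {ι : Type*} [DecidableEq ι]
    (F : Finset ι) (n : ℕ) (x : Fin n → Finset ι) (hx : ∀ i, x i ⊆ F)
    (c : Finset ι → ℕ)
    (hc : ∀ X, c X = (Finset.univ.filter fun i : Fin n => X ⊆ x i).card)
    (s : ℕ) (hs : 1 ≤ s) :
    (∀ X ⊆ F,
      (Finset.univ.filter fun o : Option (Fin n) => X ⊆ o.elim F x).card
        = c X + 1) ∧
    (∀ X ⊆ F, ((s : ℝ) / (s + 1) ≤ (c X : ℝ) / (c X + 1) ↔ s ≤ c X)) ∧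
    (F.powerset.filter fun X => (s : ℝ) / (s + 1) ≤ (c X : ℝ) / (c X + 1))
      = (F.powerset.filter fun X => s ≤ c X) ∧
    (F.powerset.filter fun X => (s : ℝ) / (s + 1) ≤ (c X : ℝ) / (c X + 1)).card
      = (F.powerset.filter fun X => s ≤ c X).card :=
  support_to_accuracy_reduction_general F n x c hc s
end

section
/- Distribution of the rule-sampling algorithm: let D⁺, D⁻, D̃ be finite sets of records, each record a having a finite item set cov(a). For a triple t = (a, b, c) ∈ D⁺ × D⁻ × D̃, let R(t) = {X ⊆ cov(a) : X \ (cov(b) ∪ cov(c)) ≠ ∅}, so |R(t)| = (2^{|cov(a) \ (cov(b) ∪ cov(c))|} - 1) · 2^{|cov(a) ∩ (cov(b) ∪ cov(c))|}. Suppose the total N = Σ_t |R(t)| is positive, a triple t is drawn with probability |R(t)| / N, and then X is drawn uniformly from R(t). Then the probability of obtaining a given itemset X equals |{(a, b, c) ∈ D⁺ × D⁻ × D̃ : X ⊆ cov(a) and X \ (cov(b) ∪ cov(c)) ≠ ∅}| / N. -/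
open Finset

theorem Finset.card_filter_powerset_sdiff_ne_empty {ι : Type*} [DecidableEq ι] (A B : Finset ι) :
    #(A.powerset.filter fun X => X \ B ≠ ∅) = (2 ^ #(A \ B) - 1) * 2 ^ #(A ∩ B) := by
  have h_empty : A.powerset.filter (fun X => X \ B = ∅) = (A ∩ B).powerset := by
    ext X
    simp only [mem_filter, mem_powerset, sdiff_eq_empty_iff_subset, subset_inter_iff]
  have h_split := card_filter_add_card_filter_not (s := A.powerset) (p := fun X => X \ B = ∅)
  rw [h_empty, card_powerset, card_powerset] at h_split
  have h_pow : 2 ^ #A = 2 ^ #(A \ B) * 2 ^ #(A ∩ B) := by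
    rw [← pow_add, card_sdiff_add_card_inter]
  rw [Nat.sub_one_mul, ← h_pow]
  simp only [ne_eq]
  omega

/-- The weight `#(R t)` cancels the uniform factor `1 / #(R t)`, since `X ∈ R t` makes `R t`
nonempty. -/
theorem Finset.sum_card_div_mul_ite_mem {α β : Type*} [DecidableEq β]
    (s : Finset α) (R : α → Finset β) (N : ℝ) (X : β) :
    ∑ t ∈ s, (#(R t) : ℝ) / N * (if X ∈ R t then 1 / (#(R t) : ℝ) else 0) =
      #(s.filter fun t => X ∈ R t) / N := by
  have h_term : ∀ t, (#(R t) : ℝ) / N * (if X ∈ R t then 1 / (#(R t) : ℝ) else 0) =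
      if X ∈ R t then 1 / N else 0 := by
    intro t
    split_ifs with hX
    · have h_card : (#(R t) : ℝ) ≠ 0 := by exact_mod_cast (card_pos.mpr ⟨X, hX⟩).ne'
      field_simp
    · exact mul_zero _
  rw [sum_congr rfl fun t _ => h_term t, ← sum_filter, sum_const, nsmul_eq_mul, mul_one_div]

theorem rule_sampling_distribution_general {ρ ι : Type*} [DecidableEq ι]
    (Dp Dm Dc : Finset ρ) (cov : ρ → Finset ι)
    (R : ρ × ρ × ρ → Finset (Finset ι))
    (hR : ∀ t, R t = (cov t.1).powerset.filter
        fun X => X \ (cov t.2.1 ∪ cov t.2.2) ≠ ∅)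
    (N : ℕ) :
    (∀ t ∈ Dp ×ˢ Dm ×ˢ Dc,
      (R t).card =
        (2 ^ (cov t.1 \ (cov t.2.1 ∪ cov t.2.2)).card - 1) *
          2 ^ (cov t.1 ∩ (cov t.2.1 ∪ cov t.2.2)).card) ∧
    (∀ X : Finset ι,
      ∑ t ∈ Dp ×ˢ Dm ×ˢ Dc, ((R t).card : ℝ) / N *
          (if X ∈ R t then 1 / ((R t).card : ℝ) else 0) =
        (((Dp ×ˢ Dm ×ˢ Dc).filter fun t =>
            X ⊆ cov t.1 ∧ X \ (cov t.2.1 ∪ cov t.2.2) ≠ ∅).card : ℝ) / N) := by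
  refine ⟨fun t _ => by rw [hR]; exact card_filter_powerset_sdiff_ne_empty _ _, fun X => ?_⟩
  rw [sum_card_div_mul_ite_mem]
  simp only [hR, mem_filter, mem_powerset]

/-- Distribution of the rule-sampling algorithm: for each triple
`t = (a, b, c) ∈ D⁺ × D⁻ × D̃` let
`R t = {X ⊆ cov a : X \ (cov b ∪ cov c) ≠ ∅}`, so that
`|R t| = (2^{|cov a \ (cov b ∪ cov c)|} - 1) · 2^{|cov a ∩ (cov b ∪ cov c)|}`.
If `N = Σ_t |R t| > 0`, a triple `t` is drawn with probability `|R t| / N`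
and then `X` uniformly from `R t`, then the probability of obtaining a given
itemset `X` equals
`|{(a,b,c) ∈ D⁺ × D⁻ × D̃ : X ⊆ cov a ∧ X \ (cov b ∪ cov c) ≠ ∅}| / N`. -/
theorem rule_sampling_distribution {ρ ι : Type*} [DecidableEq ι]
    (Dp Dm Dc : Finset ρ) (cov : ρ → Finset ι)
    (R : ρ × ρ × ρ → Finset (Finset ι))
    (hR : ∀ t, R t = (cov t.1).powerset.filter
        fun X => X \ (cov t.2.1 ∪ cov t.2.2) ≠ ∅)
    (N : ℕ) (hN : N = ∑ t ∈ Dp ×ˢ Dm ×ˢ Dc, (R t).card) (hNpos : 0 < N) :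
    (∀ t ∈ Dp ×ˢ Dm ×ˢ Dc,
      (R t).card =
        (2 ^ (cov t.1 \ (cov t.2.1 ∪ cov t.2.2)).card - 1) *
          2 ^ (cov t.1 ∩ (cov t.2.1 ∪ cov t.2.2)).card) ∧
    (∀ X : Finset ι,
      ∑ t ∈ Dp ×ˢ Dm ×ˢ Dc, ((R t).card : ℝ) / N *
          (if X ∈ R t then 1 / ((R t).card : ℝ) else 0) =
        (((Dp ×ˢ Dm ×ˢ Dc).filter fun t =>
            X ⊆ cov t.1 ∧ X \ (cov t.2.1 ∪ cov t.2.2) ≠ ∅).card : ℝ) / N) :=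
  rule_sampling_distribution_general Dp Dm Dc cov R hR N
end

section
/- Greedy 2-approximation for max-sum diversification with a submodular quality (Borodin, Lee, Ye): let U be a finite set, let d : U × U → ℝ≥0 satisfy d(u,u) = 0, d(u,v) = d(v,u), and d(u,w) ≤ d(u,v) + d(v,w) for all u, v, w ∈ U, let f be a nonnegative monotone non-decreasing submodular set function on subsets of U with f(∅) = 0, let λ ≥ 0, and define φ(S) = f(S) + λ · Σ_{{u,v} ⊆ S, u ≠ v} d(u,v). Let p ≤ |U| and let G be the set produced by p steps of the greedy algorithm that starts from G = ∅ and at each step adds an element u ∈ U \ G maximizing (1/2)(f(G ∪ {u}) - f(G)) + λ · Σ_{v ∈ G} d(u,v). Then φ(G) ≥ (1/2) · max{φ(S) : S ⊆ U, |S| = p}. -/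
/-!
Adding `u` to `G` raises the potential `f G / 2 + λ·div G` (with `div` the sum over unordered
pairs) by exactly the greedy gain of `u`. At step `i` the greedy gain is at least the average
gain over the `p - i` elements of `S \ G_i`. By submodularity the quality part of that average
is at least `(f S - f G_p) / (2p)`. Routing each pair of `S` through the points of `G_i` by the
triangle inequality bounds the distance part below by `i · div S / (p (p - 1))`. Summing over
the `p` steps gives `f G_p / 2 + λ div G_p ≥ (f S - f G_p) / 2 + λ div S / 2`.
-/

open Finset

section

variable {α : Type*}

-- For `#S ≤ 1` the left side vanishes through division by zero, and so does `S.offDiag`.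
theorem sum_range_card_mul_sum_offDiag_div (S : Finset α) (F : α × α → ℝ) :
    ∑ i ∈ range #S, (i : ℝ) * (∑ q ∈ S.offDiag, F q) / (2 * #S * (#S - 1)) =
      (∑ q ∈ S.offDiag, F q) / 4 := by
  rcases le_or_gt #S 1 with hS | hS
  · have : S.offDiag = ∅ := by
      rw [← card_eq_zero, offDiag_card]
      exact Nat.sub_eq_zero_of_le (mul_le_of_le_one_left (Nat.zero_le _) hS)
    simp [this]
  have h_gauss : (∑ i ∈ range #S, (i : ℝ)) * 2 = #S * (#S - 1) := by
    have := congrArg (Nat.cast : ℕ → ℝ) (sum_range_id_mul_two #S)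
    push_cast [Nat.cast_sub hS.le] at this
    exact this
  have hS' : (1 : ℝ) < #S := by exact_mod_cast hS
  rw [← sum_div, ← sum_mul, div_eq_div_iff (by nlinarith) (by norm_num)]
  linear_combination (4 * ∑ q ∈ S.offDiag, F q) * h_gauss / 2

variable [DecidableEq α]

theorem sum_offDiag_eq_sum_sum_sub_sum_diag (S : Finset α) (F : α × α → ℝ) :
    ∑ q ∈ S.offDiag, F q = ∑ x ∈ S, ∑ y ∈ S, F (x, y) - ∑ x ∈ S, F (x, x) := by
  rw [← sum_product', ← diag_union_offDiag, sum_union (disjoint_diag_offDiag S), sum_diag]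
  ring

theorem sum_offDiag_fst (S : Finset α) (g : α → ℝ) :
    ∑ q ∈ S.offDiag, g q.1 = (#S - 1 : ℝ) * ∑ x ∈ S, g x := by
  simp only [sum_offDiag_eq_sum_sum_sub_sum_diag, sum_const, nsmul_eq_mul, ← mul_sum]
  ring

theorem sum_offDiag_snd (S : Finset α) (g : α → ℝ) :
    ∑ q ∈ S.offDiag, g q.2 = (#S - 1 : ℝ) * ∑ x ∈ S, g x := by
  rw [sum_offDiag_eq_sum_sum_sub_sum_diag, sum_comm,
    ← sum_offDiag_eq_sum_sum_sub_sum_diag (F := fun q => g q.1), sum_offDiag_fst]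

theorem sum_offDiag_union {A B : Finset α} (d : α → α → ℝ) (hAB : Disjoint A B)
    (hd_symm : ∀ u ∈ A, ∀ v ∈ B, d u v = d v u) :
    ∑ q ∈ (A ∪ B).offDiag, d q.1 q.2 = ∑ q ∈ A.offDiag, d q.1 q.2 + ∑ q ∈ B.offDiag, d q.1 q.2
      + 2 * ∑ u ∈ A, ∑ v ∈ B, d u v := by
  have hBA : ∑ q ∈ B ×ˢ A, d q.1 q.2 = ∑ u ∈ A, ∑ v ∈ B, d u v := by
    rw [sum_product, sum_comm]
    exact sum_congr rfl fun u hu => sum_congr rfl fun v hv => (hd_symm u hu v hv).symm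
  have := disjoint_left.1 hAB
  rw [offDiag_union hAB, sum_union, sum_union, sum_union, hBA, sum_product]
  · ring
  all_goals simp only [disjoint_left, mem_union, mem_offDiag, mem_product]; grind

theorem sum_offDiag_insert {T : Finset α} {u : α} (d : α → α → ℝ) (hu : u ∉ T)
    (hd_symm : ∀ v ∈ T, d u v = d v u) :
    ∑ q ∈ (insert u T).offDiag, d q.1 q.2 = ∑ q ∈ T.offDiag, d q.1 q.2 + 2 * ∑ v ∈ T, d u v := by
  rw [insert_eq, sum_offDiag_union d (disjoint_singleton_left.2 hu) (by simpa using hd_symm)]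
  simp

section Metric

variable {U : Finset α} {d : α → α → ℝ}

theorem card_mul_sum_offDiag_le (hd_symm : ∀ u ∈ U, ∀ v ∈ U, d u v = d v u)
    (hd_tri : ∀ u ∈ U, ∀ v ∈ U, ∀ w ∈ U, d u w ≤ d u v + d v w)
    {P Q : Finset α} (hP : P ⊆ U) (hQ : Q ⊆ U) :
    #Q * ∑ q ∈ P.offDiag, d q.1 q.2 ≤ 2 * (#P - 1) * ∑ v ∈ P, ∑ w ∈ Q, d v w := by
  have hw : ∀ w ∈ Q, ∑ q ∈ P.offDiag, d q.1 q.2 ≤ 2 * (#P - 1) * ∑ v ∈ P, d v w := by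
    intro w hw
    calc ∑ q ∈ P.offDiag, d q.1 q.2 ≤ ∑ q ∈ P.offDiag, (d q.1 w + d q.2 w) := by
          refine sum_le_sum fun q hq => ?_
          obtain ⟨hq₁, hq₂, -⟩ := mem_offDiag.1 hq
          rw [hd_symm q.2 (hP hq₂) w (hQ hw)]
          exact hd_tri _ (hP hq₁) _ (hQ hw) _ (hP hq₂)
      _ = 2 * (#P - 1) * ∑ v ∈ P, d v w := by
          rw [sum_add_distrib, sum_offDiag_fst P (d · w), sum_offDiag_snd P (d · w)]
          ring
  calc #Q * ∑ q ∈ P.offDiag, d q.1 q.2 = ∑ _w ∈ Q, ∑ q ∈ P.offDiag, d q.1 q.2 := by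
        rw [sum_const, nsmul_eq_mul]
    _ ≤ ∑ w ∈ Q, 2 * (#P - 1) * ∑ v ∈ P, d v w := sum_le_sum hw
    _ = 2 * (#P - 1) * ∑ v ∈ P, ∑ w ∈ Q, d v w := by rw [← mul_sum, sum_comm]

theorem card_sdiff_mul_card_mul_sum_offDiag_le (hd_nonneg : ∀ u ∈ U, ∀ v ∈ U, 0 ≤ d u v)
    (hd_symm : ∀ u ∈ U, ∀ v ∈ U, d u v = d v u)
    (hd_tri : ∀ u ∈ U, ∀ v ∈ U, ∀ w ∈ U, d u w ≤ d u v + d v w)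
    {O T : Finset α} (hO : O ⊆ U) (hT : T ⊆ U) (hTO : #T < #O) :
    #(O \ T) * #T * ∑ q ∈ O.offDiag, d q.1 q.2 ≤
      2 * #O * (#O - 1) * ∑ v ∈ O \ T, ∑ w ∈ T, d v w := by
  set A := O ∩ T
  set B := O \ T
  set C := T \ O
  have hA : A ⊆ U := inter_subset_left.trans hO
  have hB : B ⊆ U := sdiff_subset.trans hO
  have hC : C ⊆ U := sdiff_subset.trans hT
  have hO_eq : A ∪ B = O := by rw [union_comm]; exact sdiff_union_inter O T
  have hT_eq : C ∪ A = T := by rw [show A = T ∩ O from inter_comm O T]; exact sdiff_union_inter T O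
  have hAB : Disjoint A B := (disjoint_sdiff_inter O T).symm
  have hCA : Disjoint C A := by
    rw [show A = T ∩ O from inter_comm O T]; exact disjoint_sdiff_inter T O
  have hBA : ∑ u ∈ A, ∑ v ∈ B, d u v = ∑ v ∈ B, ∑ u ∈ A, d v u := by
    rw [sum_comm]
    exact sum_congr rfl fun v hv => sum_congr rfl fun u hu => hd_symm u (hA hu) v (hB hv)
  have hO_sum : ∑ q ∈ O.offDiag, d q.1 q.2 = ∑ q ∈ A.offDiag, d q.1 q.2
      + ∑ q ∈ B.offDiag, d q.1 q.2 + 2 * ∑ v ∈ B, ∑ u ∈ A, d v u := by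
    rw [← hBA, ← sum_offDiag_union d hAB fun u hu v hv => hd_symm u (hA hu) v (hB hv), hO_eq]
  have hT_sum : ∑ v ∈ B, ∑ w ∈ T, d v w
      = ∑ v ∈ B, ∑ u ∈ A, d v u + ∑ v ∈ B, ∑ w ∈ C, d v w := by
    rw [← sum_add_distrib]
    exact sum_congr rfl fun v _ => by rw [← hT_eq, sum_union hCA, add_comm]
  have hO_card : (#O : ℝ) = #A + #B := by rw [← hO_eq, card_union_of_disjoint hAB]; push_cast; rfl
  have hT_card : (#T : ℝ) = #C + #A := by rw [← hT_eq, card_union_of_disjoint hCA]; push_cast; rfl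
  have hCB : (#C : ℝ) + 1 ≤ #B := by
    have : #T < #O := hTO
    rw [← hO_eq, ← hT_eq, card_union_of_disjoint hAB, card_union_of_disjoint hCA] at this
    exact_mod_cast (by omega : #C + 1 ≤ #B)
  have hA_route := card_mul_sum_offDiag_le hd_symm hd_tri hA hB
  have hB_route := card_mul_sum_offDiag_le hd_symm hd_tri hB hA
  have hB_route' := card_mul_sum_offDiag_le hd_symm hd_tri hB hC
  have hBA_nonneg : 0 ≤ ∑ v ∈ B, ∑ u ∈ A, d v u :=
    sum_nonneg fun v hv => sum_nonneg fun u hu => hd_nonneg v (hB hv) u (hA hu)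
  have hBC_nonneg : 0 ≤ ∑ v ∈ B, ∑ w ∈ C, d v w :=
    sum_nonneg fun v hv => sum_nonneg fun w hw => hd_nonneg v (hB hv) w (hC hw)
  rw [hBA] at hA_route
  rw [hO_sum, hT_sum, hO_card, hT_card]
  -- the three routing bounds, weighted by `#C + #A`, `#B - #C` and `#A + #B`
  have ha : (0 : ℝ) ≤ #A := Nat.cast_nonneg _
  have hc : (0 : ℝ) ≤ #C := Nat.cast_nonneg _
  linarith [mul_le_mul_of_nonneg_left hA_route (by linarith : (0 : ℝ) ≤ #C + #A),
    mul_le_mul_of_nonneg_left hB_route (by linarith : (0 : ℝ) ≤ #B - #C),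
    mul_le_mul_of_nonneg_left hB_route' (by linarith : (0 : ℝ) ≤ #A + #B),
    mul_nonneg (mul_nonneg ha (by linarith : (0 : ℝ) ≤ #B - #C)) hBA_nonneg,
    mul_nonneg (mul_nonneg (by linarith : (0 : ℝ) ≤ #A + #B) ha) hBC_nonneg]

end Metric

theorem sub_le_sum_marginal {f : Finset α → ℝ}
    (hf_submod : ∀ S T : Finset α, S ⊆ T → ∀ u ∉ T, f (insert u T) - f T ≤ f (insert u S) - f S)
    (T B : Finset α) (hBT : Disjoint B T) :
    f (T ∪ B) - f T ≤ ∑ v ∈ B, (f (insert v T) - f T) := by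
  induction B using Finset.induction_on with
  | empty => simp
  | @insert v B hvB ih =>
    rw [disjoint_insert_left] at hBT
    have hv : v ∉ T ∪ B := by simp [hBT.1, hvB]
    rw [sum_insert hvB, union_insert]
    linarith [hf_submod T (T ∪ B) subset_union_left v hv, ih hBT.2]

noncomputable def greedyGain (f : Finset α → ℝ) (d : α → α → ℝ) (lam : ℝ) (T : Finset α) (v : α) :
    ℝ :=
  1 / 2 * (f (insert v T) - f T) + lam * ∑ w ∈ T, d v w

theorem div_add_le_greedyGain {U : Finset α} {d : α → α → ℝ} {f : Finset α → ℝ} {lam : ℝ}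
    (hd_nonneg : ∀ u ∈ U, ∀ v ∈ U, 0 ≤ d u v)
    (hd_symm : ∀ u ∈ U, ∀ v ∈ U, d u v = d v u)
    (hd_tri : ∀ u ∈ U, ∀ v ∈ U, ∀ w ∈ U, d u w ≤ d u v + d v w)
    (hf_mono : ∀ S T : Finset α, S ⊆ T → f S ≤ f T)
    (hf_submod : ∀ S T : Finset α, S ⊆ T → ∀ u ∉ T, f (insert u T) - f T ≤ f (insert u S) - f S)
    (hlam : 0 ≤ lam) {O T : Finset α} {u : α} (hO : O ⊆ U) (hT : T ⊆ U) (hTO : #T < #O)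
    (hu : ∀ v ∈ U \ T, greedyGain f d lam T v ≤ greedyGain f d lam T u) :
    max 0 (f O - f T) / (2 * #O) +
        lam * (#T * (∑ q ∈ O.offDiag, d q.1 q.2) / (2 * #O * (#O - 1))) ≤
      greedyGain f d lam T u := by
  set B := O \ T
  have hB_pos : (0 : ℝ) < #B := by
    have := le_card_sdiff T O
    have : 0 < #(O \ T) := by omega
    exact_mod_cast this
  have hB_le : (#B : ℝ) ≤ #O := by exact_mod_cast card_le_card sdiff_subset
  have hO_pos : (1 : ℝ) ≤ #O := by exact_mod_cast (by omega : 1 ≤ #O)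
  have h_avg : ∑ v ∈ B, greedyGain f d lam T v ≤ #B * greedyGain f d lam T u := by
    rw [← nsmul_eq_mul]
    exact sum_le_card_nsmul _ _ _ fun v hv => hu v (sdiff_subset_sdiff hO subset_rfl hv)
  have h_split : ∑ v ∈ B, greedyGain f d lam T v
      = 1 / 2 * ∑ v ∈ B, (f (insert v T) - f T) + lam * ∑ v ∈ B, ∑ w ∈ T, d v w := by
    simp only [greedyGain, sum_add_distrib, mul_sum]
  have h_marginal : max 0 (f O - f T) ≤ ∑ v ∈ B, (f (insert v T) - f T) := by
    refine max_le (sum_nonneg fun v _ => sub_nonneg.2 (hf_mono _ _ (subset_insert v T))) ?_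
    have := sub_le_sum_marginal hf_submod T B sdiff_disjoint
    have := hf_mono O (T ∪ B) (by simp [B])
    linarith
  have h_cross : #B * (#T * (∑ q ∈ O.offDiag, d q.1 q.2) / (2 * #O * (#O - 1)))
      ≤ ∑ v ∈ B, ∑ w ∈ T, d v w := by
    rw [← mul_div_assoc, ← mul_assoc]
    refine div_le_of_le_mul₀ (by nlinarith) (sum_nonneg fun v hv => sum_nonneg fun w hw =>
      hd_nonneg v (hO (mem_sdiff.1 hv).1) w (hT hw)) ?_
    rw [mul_comm _ (2 * (#O : ℝ) * _)]
    exact card_sdiff_mul_card_mul_sum_offDiag_le hd_nonneg hd_symm hd_tri hO hT hTO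
  have h_quality : #B * (max 0 (f O - f T) / (2 * #O)) ≤ max 0 (f O - f T) / 2 := by
    have := le_max_left 0 (f O - f T)
    rw [mul_div_assoc', div_le_div_iff₀ (by positivity) (by positivity)]
    nlinarith
  refine le_of_mul_le_mul_left ?_ hB_pos
  nlinarith [mul_le_mul_of_nonneg_left h_cross hlam]

section Chain

variable {G : ℕ → Finset α} {p : ℕ}

theorem card_of_eq_insert_succ (hG0 : G 0 = ∅)
    (hG : ∀ i < p, ∃ u ∉ G i, G (i + 1) = insert u (G i)) : ∀ i ≤ p, #(G i) = i := by
  intro i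
  induction i with
  | zero => simp [hG0]
  | succ i ih =>
    intro hi
    obtain ⟨u, hu, hGu⟩ := hG i hi
    rw [hGu, card_insert_of_notMem hu, ih (by omega)]

theorem subset_of_eq_insert_succ (hG : ∀ i < p, ∃ u, G (i + 1) = insert u (G i)) :
    ∀ i ≤ p, G i ⊆ G p := fun _ hi =>
  Nat.decreasingInduction (motive := fun k _ => G k ⊆ G p)
    (fun k hk ih => by
      obtain ⟨u, hGu⟩ := hG k hk
      rw [hGu] at ih
      exact (subset_insert u _).trans ih)
    subset_rfl hi

end Chain

end

theorem greedy_max_sum_diversification_general {α : Type*} [DecidableEq α]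
    (U : Finset α) (d : α → α → ℝ) (f : Finset α → ℝ) (lam : ℝ)
    (hd_nonneg : ∀ u ∈ U, ∀ v ∈ U, 0 ≤ d u v)
    (hd_symm : ∀ u ∈ U, ∀ v ∈ U, d u v = d v u)
    (hd_tri : ∀ u ∈ U, ∀ v ∈ U, ∀ w ∈ U, d u w ≤ d u v + d v w)
    (hf_empty : f ∅ = 0)
    (hf_mono : ∀ S T : Finset α, S ⊆ T → f S ≤ f T)
    (hf_submod : ∀ S T : Finset α, S ⊆ T → ∀ u ∉ T,
      f (insert u T) - f T ≤ f (insert u S) - f S)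
    (hlam : 0 ≤ lam)
    (φ : Finset α → ℝ)
    (hφ : ∀ S, φ S = f S + lam * ((∑ q ∈ S.offDiag, d q.1 q.2) / 2))
    (p : ℕ)
    (G : ℕ → Finset α)
    (hG0 : G 0 = ∅)
    (hGsub : ∀ i, G i ⊆ U)
    (hGstep : ∀ i < p, ∃ u ∈ U \ G i,
      G (i + 1) = insert u (G i) ∧
      ∀ v ∈ U \ G i,
        (1 / 2) * (f (insert v (G i)) - f (G i)) + lam * ∑ w ∈ G i, d v w ≤
        (1 / 2) * (f (insert u (G i)) - f (G i)) + lam * ∑ w ∈ G i, d u w) :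
    ∀ S ⊆ U, S.card = p → φ S ≤ 2 * φ (G p) := by
  intro S hSU hScard
  obtain rfl | hp_pos := Nat.eq_zero_or_pos p
  · simp [hφ, hG0, hf_empty, card_eq_zero.1 hScard]
  have hG : ∀ i < p, ∃ u ∉ G i, G (i + 1) = insert u (G i) := fun i hi =>
    let ⟨u, hu, hGu, _⟩ := hGstep i hi; ⟨u, (mem_sdiff.1 hu).2, hGu⟩
  have hcard := card_of_eq_insert_succ hG0 hG
  have hsub := subset_of_eq_insert_succ fun i hi => (hG i hi).imp fun _ h => h.2
  set g : ℕ → ℝ := fun j => f (G j) / 2 + lam * ((∑ q ∈ (G j).offDiag, d q.1 q.2) / 2)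
  have hstep : ∀ i ∈ range p, max 0 (f S - f (G p)) / (2 * p) +
      lam * (i * (∑ q ∈ S.offDiag, d q.1 q.2) / (2 * p * (p - 1))) ≤ g (i + 1) - g i := by
    intro i hi
    have hi : i < p := mem_range.1 hi
    obtain ⟨u, hu, hGu, hmax⟩ := hGstep i hi
    have hM : max 0 (f S - f (G p)) / (2 * p) ≤ max 0 (f S - f (G i)) / (2 * p) := by
      gcongr
      exact hf_mono _ _ (hsub i hi.le)
    have := div_add_le_greedyGain hd_nonneg hd_symm hd_tri hf_mono hf_submod hlam hSU (hGsub i)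
      (by rw [hcard i hi.le, hScard]; exact hi) hmax
    rw [hcard i hi.le, hScard] at this
    simp only [g, hGu, sum_offDiag_insert d (mem_sdiff.1 hu).2
      fun v hv => hd_symm _ (mem_sdiff.1 hu).1 v (hGsub i hv)]
    unfold greedyGain at this
    linarith
  have hS_sum := sum_range_card_mul_sum_offDiag_div S fun q => d q.1 q.2
  have hsum := sum_le_sum hstep
  rw [hScard] at hS_sum
  rw [sum_range_sub, sum_add_distrib, sum_const, card_range, nsmul_eq_mul, ← mul_sum, hS_sum,
    mul_div_left_comm, div_mul_cancel_right₀ (by positivity)] at hsum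
  simp only [g, hG0, offDiag_empty, sum_empty, hf_empty] at hsum
  rw [hφ, hφ]
  linarith [le_max_right 0 (f S - f (G p))]

/-- Greedy 2-approximation for max-sum diversification with a submodular
quality (Borodin–Lee–Ye).  `d` is a pseudometric on the finite ground set
`U`, `f` a nonnegative, normalized, monotone submodular quality,
`φ(S) = f(S) + λ · Σ_{{u,v} ⊆ S, u ≠ v} d(u,v)` (the sum over unordered
pairs, here written as half the sum over ordered pairs of distinct
elements).  The set `G p` produced by `p` greedy steps, each adding an
element of `U \ G` maximizing
`(1/2)(f(G ∪ {u}) - f(G)) + λ Σ_{v ∈ G} d(u,v)`,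
satisfies `φ(G p) ≥ (1/2)·max{φ(S) : S ⊆ U, |S| = p}`. -/
theorem greedy_max_sum_diversification {α : Type*} [DecidableEq α]
    (U : Finset α) (d : α → α → ℝ) (f : Finset α → ℝ) (lam : ℝ)
    (hd_nonneg : ∀ u ∈ U, ∀ v ∈ U, 0 ≤ d u v)
    (hd_self : ∀ u ∈ U, d u u = 0)
    (hd_symm : ∀ u ∈ U, ∀ v ∈ U, d u v = d v u)
    (hd_tri : ∀ u ∈ U, ∀ v ∈ U, ∀ w ∈ U, d u w ≤ d u v + d v w)
    (hf_nonneg : ∀ S : Finset α, 0 ≤ f S)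
    (hf_empty : f ∅ = 0)
    (hf_mono : ∀ S T : Finset α, S ⊆ T → f S ≤ f T)
    (hf_submod : ∀ S T : Finset α, S ⊆ T → ∀ u ∉ T,
      f (insert u T) - f T ≤ f (insert u S) - f S)
    (hlam : 0 ≤ lam)
    (φ : Finset α → ℝ)
    (hφ : ∀ S, φ S = f S + lam * ((∑ q ∈ S.offDiag, d q.1 q.2) / 2))
    (p : ℕ) (hp : p ≤ U.card)
    (G : ℕ → Finset α)
    (hG0 : G 0 = ∅)
    (hGsub : ∀ i, G i ⊆ U)
    (hGstep : ∀ i < p, ∃ u ∈ U \ G i,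
      G (i + 1) = insert u (G i) ∧
      ∀ v ∈ U \ G i,
        (1 / 2) * (f (insert v (G i)) - f (G i)) + lam * ∑ w ∈ G i, d v w ≤
        (1 / 2) * (f (insert u (G i)) - f (G i)) + lam * ∑ w ∈ G i, d u w) :
    ∀ S ⊆ U, S.card = p → φ S ≤ 2 * φ (G p) :=
  greedy_max_sum_diversification_general U d f lam hd_nonneg hd_symm hd_tri hf_empty hf_mono
    hf_submod hlam φ hφ p G hG0 hGsub hGstep
end
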